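/- arXiv:2512.11117 — 4 statements merged into one kernel-verified Lean document; each statement's English description precedes it below -/
import Mathlib

section
/- Let n ∈ ℕ, b ∈ K, and define F(x,y) = y·(n-1)!·Σ_{ν=0}^{n-1} (-1)^{n+ν} (n+b-ν+1)_ν x^ν/ν! + (b+1)_n x^n. Then the identity (1-x)·∂F/∂x - (n - n x - y)·(b+1)_n x^{n-1} = -(n+b)·(F - (b+1)_n x^n) holds in K[x,y]. -/
open MvPolynomial

/-- Pochhammer symbol `(c)_n = c(c+1)⋯(c+n-1)`. -/
noncomputable def poch (c : ℝ) (n : ℕ) : ℝ := ∏ i ∈ Finset.range n, (c + i)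

/-- The polynomial `F(x,y) = y (n-1)! Σ_{ν=0}^{n-1} (-1)^{n+ν} (n+b-ν+1)_ν x^ν/ν! + (b+1)_n x^n`,
with `x = X 0`, `y = X 1`. -/
noncomputable def LVF (n : ℕ) (b : ℝ) : MvPolynomial (Fin 2) ℝ :=
  C ((Nat.factorial (n - 1) : ℝ)) * X 1 *
      ∑ ν ∈ Finset.range n,
        C ((-1) ^ (n + ν) * poch ((n : ℝ) + b - ν + 1) ν / (Nat.factorial ν : ℝ)) * X 0 ^ ν
    + C (poch (b + 1) n) * X 0 ^ n


lemma poch_succ' (c : ℝ) (ν : ℕ) : poch c (ν + 1) = c * poch (c + 1) ν := by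
  unfold poch
  rw [Finset.prod_range_succ', mul_comm]
  congr 1
  · push_cast; ring
  · refine Finset.prod_congr rfl fun i _ => ?_
    push_cast; ring

noncomputable def aco (n : ℕ) (b : ℝ) (ν : ℕ) : ℝ :=
  (-1) ^ (n + ν) * poch ((n : ℝ) + b - ν + 1) ν / (Nat.factorial ν : ℝ)

lemma aco_succ (n : ℕ) (b : ℝ) (ν : ℕ) :
    ((ν : ℝ) + 1) * aco n b (ν + 1) = ((ν : ℝ) - n - b) * aco n b ν := by
  unfold aco
  have h1 : (n : ℝ) + b - (ν + 1 : ℕ) + 1 = (n : ℝ) + b - ν := by push_cast; ring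
  rw [h1, poch_succ']
  have h2 : ((Nat.factorial ν : ℝ)) ≠ 0 := Nat.cast_ne_zero.2 (Nat.factorial_ne_zero ν)
  have h3 : ((Nat.factorial (ν+1) : ℝ)) = ((ν:ℝ)+1) * Nat.factorial ν := by
    rw [Nat.factorial_succ]; push_cast; ring
  rw [h3, show n + (ν+1) = (n + ν) + 1 by ring, pow_succ]
  field_simp
  ring

lemma aco_top (m : ℕ) (b : ℝ) :
    (Nat.factorial m : ℝ) * ((b + 1) * aco (m + 1) b m) + poch (b + 1) (m + 1) = 0 := by
  unfold aco
  have h4 : ((m + 1 : ℕ) : ℝ) + b - m + 1 = b + 2 := by push_cast; ring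
  rw [h4, poch_succ', show m + 1 + m = 2 * m + 1 by ring, pow_succ, pow_mul]
  have h2 : ((Nat.factorial m : ℝ)) ≠ 0 := Nat.cast_ne_zero.2 (Nat.factorial_ne_zero m)
  rw [show ((-1 : ℝ) ^ 2) = 1 by norm_num, one_pow]
  field_simp
  ring

lemma csum (c : ℝ) (g : ℕ → ℝ) (s : Finset ℕ) :
    C c * ∑ ν ∈ s, C (g ν) * (X 0 : MvPolynomial (Fin 2) ℝ) ^ ν
      = ∑ ν ∈ s, C (c * g ν) * X 0 ^ ν := by
  rw [Finset.mul_sum]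
  exact Finset.sum_congr rfl fun ν _ => by rw [← mul_assoc, ← map_mul]

/-- `(1-x)F_x - (n-nx-y)(b+1)_n x^{n-1} = -(n+b)(F - (b+1)_n x^n)`. -/
theorem key_identity (n : ℕ) (b : ℝ) (hn : 1 ≤ n) :
    (1 - X 0) * pderiv (0 : Fin 2) (LVF n b)
        - (C (n : ℝ) - C (n : ℝ) * X 0 - X 1) * C (poch (b + 1) n) * X 0 ^ (n - 1) =
      -C ((n : ℝ) + b) * (LVF n b - C (poch (b + 1) n) * X 0 ^ n) := by
  obtain ⟨m, rfl⟩ : ∃ m, n = m + 1 := ⟨n - 1, (Nat.succ_pred_eq_of_pos hn).symm⟩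
  clear hn
  simp only [Nat.add_sub_cancel]
  set f : ℝ := (Nat.factorial m : ℝ) with hf
  set p : ℝ := poch (b + 1) (m + 1) with hp
  set S : MvPolynomial (Fin 2) ℝ :=
    ∑ ν ∈ Finset.range (m + 1), C (aco (m + 1) b ν) * X 0 ^ ν with hS
  set T : MvPolynomial (Fin 2) ℝ :=
    ∑ ν ∈ Finset.range (m + 1), C (aco (m + 1) b ν * ν) * X 0 ^ (ν - 1) with hT
  have hLVF : LVF (m + 1) b = C f * X 1 * S + C p * X 0 ^ (m + 1) := by
    rw [LVF, Nat.add_sub_cancel]; rfl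
  have hDS : pderiv (0 : Fin 2) S = T := by
    rw [hS, hT, map_sum]
    refine Finset.sum_congr rfl fun ν _ => ?_
    rw [pderiv_C_mul, pderiv_pow, pderiv_X_self, mul_one, map_mul, ← C_eq_coe_nat]
    ring
  have hD : pderiv (0 : Fin 2) (LVF (m + 1) b)
      = C f * X 1 * T + C p * (C ((m + 1 : ℕ) : ℝ) * X 0 ^ m) := by
    rw [hLVF, map_add, mul_assoc, pderiv_C_mul, pderiv_mul, pderiv_X_of_ne (by decide),
      pderiv_C_mul, pderiv_pow, pderiv_X_self, mul_one, hDS, Nat.add_sub_cancel,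
      ← C_eq_coe_nat]
    ring
  have hXT : X 0 * T = ∑ ν ∈ Finset.range (m + 1), C (aco (m + 1) b ν * ν) * X 0 ^ ν := by
    rw [hT, Finset.mul_sum]
    refine Finset.sum_congr rfl fun ν _ => ?_
    match ν with
    | 0 => simp
    | Nat.succ k => rw [Nat.succ_sub_one, pow_succ]; ring
  have hTA : T = ∑ ν ∈ Finset.range m,
      C (((ν : ℝ) - ((m + 1 : ℕ) : ℝ) - b) * aco (m + 1) b ν) * X 0 ^ ν := by
    rw [hT, Finset.sum_range_succ']
    simp only [Nat.cast_zero, mul_zero, map_zero, zero_mul, add_zero, Nat.succ_sub_one]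
    refine Finset.sum_congr rfl fun ν _ => ?_
    congr 1
    rw [← aco_succ (m + 1) b ν]
    congr 1
    push_cast; ring
  have key : C f * ((1 - X 0) * T + C (((m + 1 : ℕ) : ℝ) + b) * S) + C p * X 0 ^ m = 0 := by
    have expand : C f * ((1 - X 0) * T + C (((m + 1 : ℕ) : ℝ) + b) * S) + C p * X 0 ^ m
        = C f * T - C f * (X 0 * T) + C (f * (((m + 1 : ℕ) : ℝ) + b)) * S + C p * X 0 ^ m := by
      rw [map_mul]; ring
    rw [expand, hXT, hTA, csum, csum, hS, csum, Finset.sum_range_succ, Finset.sum_range_succ]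
    have combine : (∑ ν ∈ Finset.range m,
            C (f * (((ν : ℝ) - ((m + 1 : ℕ) : ℝ) - b) * aco (m + 1) b ν))
              * (X 0 : MvPolynomial (Fin 2) ℝ) ^ ν)
          - ((∑ ν ∈ Finset.range m, C (f * (aco (m + 1) b ν * ν)) * X 0 ^ ν)
              + C (f * (aco (m + 1) b m * m)) * X 0 ^ m)
          + ((∑ ν ∈ Finset.range m, C (f * (((m + 1 : ℕ) : ℝ) + b) * aco (m + 1) b ν) * X 0 ^ ν)
              + C (f * (((m + 1 : ℕ) : ℝ) + b) * aco (m + 1) b m) * X 0 ^ m)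
          + C p * X 0 ^ m
        = (∑ ν ∈ Finset.range m,
            (C (f * (((ν : ℝ) - ((m + 1 : ℕ) : ℝ) - b) * aco (m + 1) b ν))
              - C (f * (aco (m + 1) b ν * ν))
              + C (f * (((m + 1 : ℕ) : ℝ) + b) * aco (m + 1) b ν)) * X 0 ^ ν)
          + (C (f * (((m + 1 : ℕ) : ℝ) + b) * aco (m + 1) b m)
              - C (f * (aco (m + 1) b m * m)) + C p) * X 0 ^ m := by
      simp only [sub_mul, add_mul, Finset.sum_sub_distrib, Finset.sum_add_distrib]
      ring
    refine combine.trans ?_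
    have h1 : ∀ ν ∈ Finset.range m,
        (C (f * (((ν : ℝ) - ((m + 1 : ℕ) : ℝ) - b) * aco (m + 1) b ν))
          - C (f * (aco (m + 1) b ν * ν))
          + C (f * (((m + 1 : ℕ) : ℝ) + b) * aco (m + 1) b ν))
          * (X 0 : MvPolynomial (Fin 2) ℝ) ^ ν = 0 := by
      intro ν _
      rw [← map_sub, ← map_add,
        show f * (((ν : ℝ) - ((m + 1 : ℕ) : ℝ) - b) * aco (m + 1) b ν)
            - f * (aco (m + 1) b ν * ν)
            + f * (((m + 1 : ℕ) : ℝ) + b) * aco (m + 1) b ν = 0 by push_cast; ring,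
        map_zero, zero_mul]
    rw [Finset.sum_congr rfl h1, Finset.sum_const_zero, zero_add,
      ← map_sub, ← map_add,
      show f * (((m + 1 : ℕ) : ℝ) + b) * aco (m + 1) b m - f * (aco (m + 1) b m * m) + p
          = f * ((b + 1) * aco (m + 1) b m) + p by push_cast; ring,
      hf, hp, aco_top, map_zero, zero_mul]
  rw [hD, hLVF]
  linear_combination (X 1 : MvPolynomial (Fin 2) ℝ) * key
end

section
/- Let n ∈ ℕ, b ∈ K, and F(x,y) = y·(n-1)!·Σ_{ν=0}^{n-1} (-1)^{n+ν} (n+b-ν+1)_ν x^ν/ν! + (b+1)_n x^n. Then x(1-x)·∂F/∂x + y(n + b x - y)·∂F/∂y = (n - n x - y)·F, i.e., the curve {F = 0} is an invariant algebraic curve of the Lotka–Volterra system ẋ = x(1-x), ẏ = y(n + b x - y), with cofactor K = n - n x - y. -/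
/-!
Write `F = y S(x) + c x^n` with `S = Σ_{ν<n} a_ν x^ν` and `c = (b+1)_n`. As `S` does not
involve `y`, the invariance identity is `y` times `x(1-x) S' + (b+n) x S + c x^n = 0`.
The coefficients satisfy `(ν+1) a_{ν+1} + (b+n-ν) a_ν = 0`, because `(d)_{ν+1} = d (d+1)_ν`,
so the left side telescopes to `((b+1) a_{n-1} + c) x^n`, and
`(b+1) a_{n-1} = -(b+1)(b+2)_{n-1} = -c`.
-/

open MvPolynomial

section

variable {σ R : Type*} [CommRing R]

theorem X_mul_pderiv_X_pow (i : σ) (n : ℕ) :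
    X i * pderiv i ((X i : MvPolynomial σ R) ^ n) = (n : MvPolynomial σ R) * X i ^ n := by
  cases n with
  | zero => simp
  | succ k => rw [pderiv_pow, pderiv_X_self, Nat.add_sub_cancel]; ring

theorem logistic_pderiv_sum_of_recurrence (i : σ) (a : ℕ → R) (β : R) (m : ℕ)
    (h : ∀ k < m, (k + 1) * a (k + 1) + (β - k) * a k = 0) :
    X i * (1 - X i) * pderiv i (∑ ν ∈ Finset.range (m + 1), C (a ν) * X i ^ ν)
        + C β * X i * ∑ ν ∈ Finset.range (m + 1), C (a ν) * X i ^ ν =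
      C ((β - m) * a m) * X i ^ (m + 1) := by
  induction m with
  | zero => simp only [Finset.sum_range_one, pow_zero, mul_one, pderiv_C, Nat.cast_zero, sub_zero,
      zero_add, pow_one, map_mul]; ring
  | succ m ih =>
    have hm := ih fun k hk => h k (hk.trans m.lt_succ_self)
    have hrec : C ((m + 1) * a (m + 1) + (β - m) * a m) = (0 : MvPolynomial σ R) := by
      rw [h m m.lt_succ_self, C_0]
    rw [Finset.sum_range_succ, map_add, pderiv_C_mul]
    have hX := X_mul_pderiv_X_pow (σ := σ) (R := R) i (m + 1)
    simp only [map_add, map_mul, map_sub, map_natCast, C_1, Nat.cast_succ] at hrec hX hm ⊢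
    linear_combination hm + (1 - X i) * C (a (m + 1)) * hX + X i ^ (m + 1) * hrec

theorem invariant_of_eq_X_one_mul_add (n : ℕ) (b c : R) (S : MvPolynomial (Fin 2) R)
    (hS : pderiv 1 S = 0)
    (hkey : X 0 * (1 - X 0) * pderiv 0 S + C (b + n) * X 0 * S + C c * X 0 ^ n = 0) :
    X 0 * (1 - X 0) * pderiv 0 (X 1 * S + C c * X 0 ^ n)
        + X 1 * (C (n : R) + C b * X 0 - X 1) * pderiv 1 (X 1 * S + C c * X 0 ^ n) =
      (C (n : R) - C (n : R) * X 0 - X 1) * (X 1 * S + C c * X 0 ^ n) := by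
  have hX := X_mul_pderiv_X_pow (σ := Fin 2) (R := R) 0 n
  have hx : pderiv 1 ((X 0 : MvPolynomial (Fin 2) R) ^ n) = 0 := by
    rw [pderiv_pow, pderiv_X_of_ne (by decide), mul_zero]
  simp only [map_add, pderiv_mul, pderiv_C, pderiv_X_self, hS, hx,
    pderiv_X_of_ne (show (1 : Fin 2) ≠ 0 by decide), map_natCast] at hkey ⊢
  linear_combination X 1 * hkey + (1 - X 0) * C c * hX

end

theorem poch_succ_eq_mul (c : ℝ) (k : ℕ) : poch c (k + 1) = c * poch (c + 1) k := by
  simp only [poch, Finset.prod_range_succ', Nat.cast_zero, add_zero, Nat.cast_succ, mul_comm c]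
  exact congrArg (· * c) (Finset.prod_congr rfl fun i _ => by ring)

/-- The coefficient of `y x^ν` in `LVF n b`. -/
noncomputable def lvfCoeff (n : ℕ) (b : ℝ) (ν : ℕ) : ℝ :=
  (Nat.factorial (n - 1) : ℝ) *
    ((-1) ^ (n + ν) * poch ((n : ℝ) + b - ν + 1) ν / (Nat.factorial ν : ℝ))

theorem lvfCoeff_recurrence (n : ℕ) (b : ℝ) (k : ℕ) :
    ((k : ℝ) + 1) * lvfCoeff n b (k + 1) + (b + n - k) * lvfCoeff n b k = 0 := by
  have hshift : (n : ℝ) + b - ((k + 1 : ℕ) : ℝ) + 1 = n + b - k := by push_cast; ring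
  have hk : ((k : ℝ) + 1) ≠ 0 := by positivity
  have hfact : (Nat.factorial k : ℝ) ≠ 0 := by positivity
  rw [lvfCoeff, lvfCoeff, hshift, poch_succ_eq_mul, Nat.factorial_succ, Nat.cast_mul,
    ← add_assoc, pow_succ]
  push_cast
  field_simp
  ring

theorem lvfCoeff_last (m : ℕ) (b : ℝ) :
    (b + 1) * lvfCoeff (m + 1) b m + poch (b + 1) (m + 1) = 0 := by
  have hshift : ((m + 1 : ℕ) : ℝ) + b - m + 1 = b + 1 + 1 := by push_cast; ring
  have hsign : (-1 : ℝ) ^ (m + 1 + m) = -1 := by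
    rw [show m + 1 + m = 2 * m + 1 by ring, pow_succ, pow_mul]; norm_num
  have hfact : (Nat.factorial m : ℝ) ≠ 0 := by positivity
  rw [lvfCoeff, hshift, hsign, Nat.add_sub_cancel, poch_succ_eq_mul]
  field_simp
  ring

theorem LVF_eq (n : ℕ) (b : ℝ) :
    LVF n b = X 1 * ∑ ν ∈ Finset.range n, C (lvfCoeff n b ν) * X 0 ^ ν
      + C (poch (b + 1) n) * X 0 ^ n := by
  simp only [LVF, lvfCoeff, C_mul, Finset.mul_sum]
  congr 1
  exact Finset.sum_congr rfl fun ν _ => by ring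

/-- `{F = 0}` is an invariant algebraic curve of `ẋ = x(1-x)`, `ẏ = y(n+bx-y)`,
with cofactor `n - nx - y`. -/
theorem LVF_invariant (n : ℕ) (b : ℝ) (hn : 1 ≤ n) :
    X 0 * (1 - X 0) * pderiv (0 : Fin 2) (LVF n b)
        + X 1 * (C (n : ℝ) + C b * X 0 - X 1) * pderiv (1 : Fin 2) (LVF n b) =
      (C (n : ℝ) - C (n : ℝ) * X 0 - X 1) * LVF n b := by
  obtain ⟨m, rfl⟩ : ∃ m, n = m + 1 := ⟨n - 1, by omega⟩
  rw [LVF_eq]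
  apply invariant_of_eq_X_one_mul_add
  · simp [pderiv_X_of_ne (show (0 : Fin 2) ≠ 1 by decide)]
  · have htel := logistic_pderiv_sum_of_recurrence (0 : Fin 2) (lvfCoeff (m + 1) b)
      (b + (m + 1 : ℕ)) m fun k _ => lvfCoeff_recurrence (m + 1) b k
    have hβ : b + ((m + 1 : ℕ) : ℝ) - m = b + 1 := by push_cast; ring
    rw [htel, hβ, ← add_mul, ← C_add, lvfCoeff_last, C_0, zero_mul]
end

section
/- Suppose b ∈ ℝ is irrational and n ∈ ℕ, n ≥ 1. Then for every integer q ≠ 0, the function H(x,y) = (y·(1-x)^{n+b}/F(x,y))^q, where F is the degree-n invariant polynomial of ẋ = x(1-x), ẏ = y(n+bx-y) with cofactor n-nx-y, is not a rational function of (x,y); in particular no power of H yields a rational first integral from this Darboux construction. -/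
/-- The function `F(x,y) = y (n-1)! Σ_{ν=0}^{n-1} (-1)^{n+ν} (n+b-ν+1)_ν x^ν/ν! + (b+1)_n x^n`. -/
noncomputable def Fval (n : ℕ) (b : ℝ) (x y : ℝ) : ℝ :=
  y * (Nat.factorial (n - 1) : ℝ) *
      ∑ ν ∈ Finset.range n,
        (-1) ^ (n + ν) * poch ((n : ℝ) + b - ν + 1) ν * x ^ ν / (Nat.factorial ν : ℝ)
    + poch (b + 1) n * x ^ n

open Filter Topology Set

theorem eq_zero_of_tendsto_rpow_nhdsGT_zero {δ c : ℝ} (hc : c ≠ 0)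
    (h : Tendsto (fun t : ℝ => t ^ δ) (𝓝[>] 0) (𝓝 c)) : δ = 0 := by
  rcases lt_trichotomy δ 0 with hδ | hδ | hδ
  · exact absurd h (not_tendsto_nhds_of_tendsto_atTop (tendsto_rpow_neg_nhdsGT_zero hδ) c)
  · exact hδ
  · have h0 : Tendsto (fun t : ℝ => t ^ δ) (𝓝[>] 0) (𝓝 0) := by
      simpa [Real.zero_rpow hδ.ne'] using
        (Real.continuousAt_rpow_const 0 δ (Or.inr hδ.le)).tendsto.mono_left nhdsWithin_le_nhds
    exact absurd (tendsto_nhds_unique h h0) hc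

theorem exists_int_eq_of_rpow_eventuallyEq_meromorphicAt {γ : ℝ} {f : ℝ → ℝ}
    (hf : MeromorphicAt f 0) (h : (fun t : ℝ => t ^ γ) =ᶠ[𝓝[>] 0] f) : ∃ k : ℤ, γ = k := by
  have hpos : ∀ᶠ t in 𝓝[>] (0 : ℝ), 0 < t := self_mem_nhdsWithin
  have hGT : 𝓝[>] (0 : ℝ) ≤ 𝓝[≠] 0 := nhdsWithin_mono _ fun t ht => ne_of_gt ht
  have hord : meromorphicOrderAt f 0 ≠ ⊤ := by
    intro htop
    obtain ⟨t, ht, hft, hf0⟩ := (hpos.and (h.and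
      (hGT ((meromorphicOrderAt_eq_top_iff).1 htop)))).exists
    exact (Real.rpow_pos_of_pos ht γ).ne' (hft.trans hf0)
  obtain ⟨g, hg, hg0, hfg⟩ := (meromorphicOrderAt_ne_top_iff hf).1 hord
  set k := (meromorphicOrderAt f 0).untop₀
  refine ⟨k, sub_eq_zero.1 (eq_zero_of_tendsto_rpow_nhdsGT_zero hg0 ?_)⟩
  refine (hg.continuousAt.tendsto.mono_left nhdsWithin_le_nhds).congr' ?_
  filter_upwards [hpos, h, hGT hfg] with t ht hft hfgt
  rw [Real.rpow_sub ht, Real.rpow_intCast, hft, hfgt, sub_zero, smul_eq_mul,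
    mul_div_cancel_left₀ _ (zpow_ne_zero _ ht.ne')]

theorem Fval_zero {n : ℕ} (hn : 1 ≤ n) (b y : ℝ) :
    Fval n b 0 y = y * (n - 1).factorial * (-1) ^ n := by
  rw [Fval, Finset.sum_eq_single_of_mem 0 (Finset.mem_range.2 hn)]
  · simp [poch, zero_pow (Nat.one_le_iff_ne_zero.1 hn)]
  · intro ν _ hν
    simp [zero_pow hν]

theorem analyticAt_Fval (n : ℕ) (b : ℝ) {x y : ℝ → ℝ} {t : ℝ} (hx : AnalyticAt ℝ x t)
    (hy : AnalyticAt ℝ y t) : AnalyticAt ℝ (fun s => Fval n b (x s) (y s)) t := by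
  unfold Fval
  fun_prop

theorem analyticAt_mvPolynomial_eval_pair (P : MvPolynomial (Fin 2) ℝ) {x y : ℝ → ℝ} {t : ℝ}
    (hx : AnalyticAt ℝ x t) (hy : AnalyticAt ℝ y t) :
    AnalyticAt ℝ (fun s => MvPolynomial.eval ![x s, y s] P) t := by
  simpa using AnalyticAt.aeval_mvPolynomial (f := fun s => ![x s, y s]) (A := ℝ) (z := t)
    (Fin.forall_fin_two.2 ⟨hx, hy⟩) P

theorem eventually_Fval_one_sub_ne_zero {n : ℕ} (hn : 1 ≤ n) (b : ℝ) :
    ∀ᶠ t in 𝓝[≠] 0, Fval n b (1 - t) 1 ≠ 0 := by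
  have han : AnalyticOnNhd ℝ (fun t => Fval n b (1 - t) 1) univ := fun t _ =>
    analyticAt_Fval n b (by fun_prop) analyticAt_const
  refine (han 0 trivial).eventually_eq_zero_or_eventually_ne_zero.resolve_left fun hzero => ?_
  have h1 := han.eqOn_zero_of_preconnected_of_eventuallyEq_zero isPreconnected_univ trivial
    hzero (mem_univ 1)
  simp only [sub_self, Fval_zero hn, Pi.zero_apply, one_mul] at h1
  exact mul_ne_zero (Nat.cast_ne_zero.2 (Nat.factorial_ne_zero _))
    (pow_ne_zero _ (by norm_num)) h1

/-- If `b` is irrational, then for every nonzero integer `q` the function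
`H(x,y) = (y (1-x)^{n+b} / F(x,y))^q` does not agree, on the region where
`1 - x > 0` and `F ≠ 0`, with any quotient of polynomials: no power of the
Darboux first integral yields a rational first integral. -/
theorem not_rational (n : ℕ) (hn : 1 ≤ n) (b : ℝ) (hb : Irrational b) (q : ℤ) (hq : q ≠ 0) :
    ¬ ∃ P Q : MvPolynomial (Fin 2) ℝ, Q ≠ 0 ∧
      ∀ x y : ℝ, 1 - x > 0 → Fval n b x y ≠ 0 →
        (y * (1 - x) ^ ((n : ℝ) + b) / Fval n b x y) ^ q =
          MvPolynomial.eval ![x, y] P / MvPolynomial.eval ![x, y] Q := by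
  rintro ⟨P, Q, -, hPQ⟩
  have hmero : MeromorphicAt (fun t => Fval n b (1 - t) 1 ^ q *
      (MvPolynomial.eval ![1 - t, 1] P / MvPolynomial.eval ![1 - t, 1] Q)) 0 :=
    ((analyticAt_Fval n b (by fun_prop) analyticAt_const).meromorphicAt.zpow q).mul
      ((analyticAt_mvPolynomial_eval_pair P (by fun_prop) analyticAt_const).meromorphicAt.div
        (analyticAt_mvPolynomial_eval_pair Q (by fun_prop) analyticAt_const).meromorphicAt)
  have hline : (fun t : ℝ => t ^ (((n : ℝ) + b) * q)) =ᶠ[𝓝[>] 0]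
      fun t => Fval n b (1 - t) 1 ^ q *
        (MvPolynomial.eval ![1 - t, 1] P / MvPolynomial.eval ![1 - t, 1] Q) := by
    filter_upwards [self_mem_nhdsWithin, nhdsWithin_le_nhds (Iio_mem_nhds one_pos),
      nhdsWithin_mono _ (fun t ht => ne_of_gt ht) (eventually_Fval_one_sub_ne_zero hn b)]
      with t (ht : 0 < t) (ht1 : t < 1) hFt
    have h := hPQ (1 - t) 1 (by linarith) hFt
    rw [sub_sub_cancel, one_mul, div_zpow, ← Real.rpow_mul_intCast ht.le] at h
    rw [← h, mul_div_cancel₀ _ (zpow_ne_zero q hFt)]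
  obtain ⟨k, hk⟩ := exists_int_eq_of_rpow_eventuallyEq_meromorphicAt hmero hline
  exact ((hb.natCast_add n).mul_intCast hq).ne_int k hk
end

section
/- Let n ∈ ℕ, n ≥ 1, and b ∈ ℝ with b+1,…,b+n ≠ 0. The family of planar quadratic systems ẋ = x(1-x), ẏ = y(n + b x - y), indexed by n, admits invariant algebraic curves of arbitrarily high degree: for every N ∈ ℕ there exist n ≥ N and a polynomial F of degree exactly n with x(1-x)F_x + y(n+bx-y)F_y = (n-nx-y)F. -/
open MvPolynomial

noncomputable def myβ (b : ℝ) (n ν : ℕ) : ℝ :=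
  (-1 : ℝ) ^ ν * (∏ i ∈ Finset.range ν, (b + n - i)) / (Nat.factorial ν : ℝ)

lemma myβ_rec (b : ℝ) (n ν : ℕ) :
    ((ν : ℝ) + 1) * myβ b n (ν + 1) = -(b + n - ν) * myβ b n ν := by
  have h1 : (Nat.factorial ν : ℝ) ≠ 0 := Nat.cast_ne_zero.2 (Nat.factorial_ne_zero ν)
  simp only [myβ, Finset.prod_range_succ, Nat.factorial_succ, Nat.cast_mul, Nat.cast_add,
    Nat.cast_one, pow_succ]
  field_simp

lemma myβ_ne (b : ℝ) (hb : ∀ k : ℕ, 1 ≤ k → b + (k : ℝ) ≠ 0) (n ν : ℕ) (hν : ν < n) :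
    myβ b n ν ≠ 0 := by
  have h1 : (Nat.factorial ν : ℝ) ≠ 0 := Nat.cast_ne_zero.2 (Nat.factorial_ne_zero ν)
  have h2 : (∏ i ∈ Finset.range ν, (b + n - i)) ≠ 0 := by
    apply Finset.prod_ne_zero_iff.2
    intro i hi
    have hin : i < n := lt_trans (Finset.mem_range.1 hi) hν
    have : b + (n : ℝ) - i = b + ((n - i : ℕ) : ℝ) := by
      push_cast [Nat.cast_sub hin.le]; ring
    rw [this]
    exact hb (n - i) (by omega)
  simp only [myβ]
  positivity

/-- The family `ẋ = x(1-x)`, `ẏ = y(n+bx-y)` admits invariant algebraic curves of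
arbitrarily high degree: for every `N` there are `n ≥ N` and a polynomial `F` of
degree exactly `n` with `x(1-x)F_x + y(n+bx-y)F_y = (n-nx-y)F`. -/
theorem arbitrarily_high_degree (b : ℝ) (hb : ∀ k : ℕ, 1 ≤ k → b + (k : ℝ) ≠ 0) (N : ℕ) :
    ∃ n : ℕ, N ≤ n ∧ 1 ≤ n ∧
      ∃ F : MvPolynomial (Fin 2) ℝ, F.totalDegree = n ∧
        X 0 * (1 - X 0) * pderiv (0 : Fin 2) F
            + X 1 * (C (n : ℝ) + C b * X 0 - X 1) * pderiv (1 : Fin 2) F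
          = (C (n : ℝ) - C (n : ℝ) * X 0 - X 1) * F := by
  set n := N + 1 with hn
  refine ⟨n, by omega, by omega, ?_⟩
  set β : ℕ → ℝ := myβ b n with hβ
  set c : ℝ := -((b + 1) * β N) with hc
  set B : MvPolynomial (Fin 2) ℝ := ∑ ν ∈ Finset.range n, C (β ν) * X 0 ^ ν with hB
  set A : MvPolynomial (Fin 2) ℝ := C c * X 0 ^ n with hA
  refine ⟨B * X 1 + A, ?_, ?_⟩
  · -- total degree
    have hcne : c ≠ 0 := by
      have := myβ_ne b hb n N (by omega)
      have hb1 : b + 1 ≠ 0 := by simpa using hb 1 le_rfl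
      simp only [hc]
      exact neg_ne_zero.2 (mul_ne_zero hb1 this)
    apply le_antisymm
    · apply (totalDegree_add _ _).trans
      apply max_le
      · apply (totalDegree_mul _ _).trans
        have : B.totalDegree ≤ N := by
          apply (totalDegree_finset_sum _ _).trans
          apply Finset.sup_le
          intro ν hν
          apply (totalDegree_mul _ _).trans
          simp [totalDegree_X_pow]
          have := Finset.mem_range.1 hν
          omega
        calc B.totalDegree + (X 1 : MvPolynomial (Fin 2) ℝ).totalDegree
            ≤ N + 1 := by
              have := totalDegree_X (1 : Fin 2) (R := ℝ)
              omega
          _ = n := rfl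
      · apply (totalDegree_mul _ _).trans
        simp [totalDegree_X_pow]
    · -- lower bound: coeff of single 0 n is c ≠ 0
      have hco : coeff (Finsupp.single 0 n) (B * X 1 + A) = c := by
        rw [coeff_add, coeff_mul_X']
        have h1 : (1 : Fin 2) ∉ (Finsupp.single (0 : Fin 2) n).support := by
          simp [Finsupp.mem_support_iff]
        rw [if_neg h1, hA, coeff_C_mul, coeff_X_pow, if_pos rfl]
        ring
      have hmem : Finsupp.single (0 : Fin 2) n ∈ (B * X 1 + A).support := by
        rw [MvPolynomial.mem_support_iff, hco]; exact hcne
      have := le_totalDegree hmem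
      simpa using this
  · -- the PDE
    have hd1 : pderiv (1 : Fin 2) (B * X 1 + A) = B := by
      have : pderiv (1 : Fin 2) B = 0 := by
        rw [hB, map_sum]
        apply Finset.sum_eq_zero
        intro ν _
        rw [pderiv_C_mul, pderiv_pow]
        simp [pderiv_X, Pi.single_apply]
      simp [hA, pderiv_C_mul, pderiv_pow, pderiv_X, Pi.single_apply, this]
    have hd0A : X 0 * (1 - X 0) * pderiv (0 : Fin 2) A = (C (n:ℝ) - C (n:ℝ) * X 0) * A := by
      rw [hA, pderiv_C_mul, Derivation.leibniz_pow]
      have : (n : ℕ) - 1 = N := by omega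
      rw [this]
      simp only [pderiv_X, Pi.single_eq_same, smul_eq_mul, nsmul_eq_mul]
      rw [show ((n : ℕ) : MvPolynomial (Fin 2) ℝ) = C (n : ℝ) from (map_natCast C n).symm]
      have hpow : (X 0 : MvPolynomial (Fin 2) ℝ) ^ n = X 0 ^ N * X 0 := by
        rw [hn, pow_succ]
      rw [hpow]; ring
    have hkey : ∀ ν : ℕ,
        X 0 * (1 - X 0) * pderiv (0 : Fin 2) (C (β ν) * X 0 ^ ν)
          + (C b + C (n:ℝ)) * X 0 * (C (β ν) * X 0 ^ ν)
        = C ((ν : ℝ) * β ν) * X 0 ^ ν - C (((ν + 1 : ℕ) : ℝ) * β (ν+1)) * X 0 ^ (ν + 1) := by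
      intro ν
      have hrC : (C ((((ν+1 : ℕ)) : ℝ) * myβ b n (ν+1)) : MvPolynomial (Fin 2) ℝ)
          = C (-(b + (n:ℝ) - ν) * myβ b n ν) := by
        rw [show (((ν+1 : ℕ)) : ℝ) = (ν : ℝ) + 1 from by push_cast; ring, myβ_rec]
      simp only [hβ]
      rw [pderiv_C_mul, Derivation.leibniz_pow]
      simp only [pderiv_X, Pi.single_eq_same, smul_eq_mul, nsmul_eq_mul,
        show ((ν : ℕ) : MvPolynomial (Fin 2) ℝ) = C (ν : ℝ) from (map_natCast C ν).symm]
      rw [hrC]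
      simp only [map_mul, map_neg, map_sub, map_add]
      cases ν with
      | zero =>
        simp
        ring
      | succ μ =>
        simp only [Nat.succ_sub_one]
        push_cast
        ring
    have hd0B : X 0 * (1 - X 0) * pderiv (0 : Fin 2) B
        + (C b + C (n:ℝ)) * X 0 * B = -A := by
      rw [hB, map_sum, Finset.mul_sum, Finset.mul_sum, ← Finset.sum_add_distrib]
      rw [Finset.sum_congr rfl (fun ν _ => hkey ν)]
      rw [Finset.sum_range_sub' (fun ν => C ((ν : ℝ) * β ν) * X 0 ^ ν)]
      have hnN : ((n : ℕ) : ℝ) * β n = -(b + 1) * β N := by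
        have := myβ_rec b n N
        rw [show (N : ℝ) + 1 = (n : ℝ) from by rw [hn]; push_cast; ring] at this
        rw [show (n : ℕ) = N + 1 from hn] at *
        rw [this]
        push_cast
        ring
      rw [hnN, hA, hc]
      simp only [map_mul, map_neg, map_add, map_one, Nat.cast_zero, map_zero]
      ring
    rw [hd1]
    have e0 : pderiv (0 : Fin 2) (B * X 1 + A)
        = pderiv (0 : Fin 2) B * X 1 + pderiv (0 : Fin 2) A := by
      simp [pderiv_mul, pderiv_X, Pi.single_apply]
      ring
    rw [e0]
    linear_combination X 1 * hd0B + hd0A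
end
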